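/- Let A ∈ GL(2,ℤ) be parabolic, i.e. tr(A)² = 4·det(A). Then for every ā ∈ 𝕋², the element (A,ā) is strongly reversible in G = GL(2,ℤ) ⋉ 𝕋². -/

import Mathlib

noncomputable section

abbrev V : Type := Fin 2 → ℝ

def L : AddSubgroup V where
  carrier := {x | ∀ i, ∃ n : ℤ, x i = (n : ℝ)}
  zero_mem' := fun i => ⟨0, by simp⟩
  add_mem' := by
    rintro a b ha hb i
    obtain ⟨m, hm⟩ := ha i
    obtain ⟨n, hn⟩ := hb i
    exact ⟨m + n, by simp [hm, hn]⟩
  neg_mem' := by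
    rintro a ha i
    obtain ⟨m, hm⟩ := ha i
    exact ⟨-m, by simp [hm]⟩

abbrev T2 := V ⧸ L

def actV (A : Matrix (Fin 2) (Fin 2) ℤ) : V →+ V :=
  (Matrix.mulVecLin (A.map (Int.cast : ℤ → ℝ))).toAddMonoidHom

lemma actV_mem (A : Matrix (Fin 2) (Fin 2) ℤ) : L ≤ L.comap (actV A) := by
  intro x hx
  show actV A x ∈ L
  intro i
  refine ⟨∑ j, A i j * Classical.choose (hx j), ?_⟩
  show (A.map (Int.cast : ℤ → ℝ)).mulVec x i = _
  simp only [Matrix.mulVec, dotProduct, Matrix.map_apply]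
  push_cast
  exact Finset.sum_congr rfl fun j _ =>
    congrArg (fun t => ((A i j : ℝ)) * t) (Classical.choose_spec (hx j))

/-- The action of an integer matrix on the torus `T2`. -/
def act (A : Matrix (Fin 2) (Fin 2) ℤ) : T2 →+ T2 :=
  QuotientAddGroup.map L L (actV A) (actV_mem A)

abbrev GL2 := (Matrix (Fin 2) (Fin 2) ℤ)ˣ

/-- Multiplication in the group `G = GL(2,ℤ) ⋉ 𝕋²`. -/
def Gmul (p q : GL2 × T2) : GL2 × T2 :=
  (p.1 * q.1, act (p.1 : Matrix (Fin 2) (Fin 2) ℤ) q.2 + p.2)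

/-- Inversion in the group `G = GL(2,ℤ) ⋉ 𝕋²`. -/
def Ginv (p : GL2 × T2) : GL2 × T2 :=
  (p.1⁻¹, -act ((p.1⁻¹ : GL2) : Matrix (Fin 2) (Fin 2) ℤ) p.2)

/-!
Strong reversibility is preserved by group homomorphisms, in particular by conjugation, and
conjugating by `(P, 0)` sends `(B, b)` to `(P B P⁻¹, P b)`. A parabolic `A ∈ GL(2,ℤ)` has
determinant `1` and trace `2ε` with `ε = ±1`, so `A - ε` is singular; a primitive vector in its
kernel completes to a basis of `ℤ²`, in which `A` reads `!![ε, x; 0, ε]`. For these normal forms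
the reflection `diag(1, -1)`, or `-1` when the normal form is the identity, together with a
suitable translation is an explicit reversing involution.
-/

open Matrix

def IsStronglyReversible {M : Type*} [Group M] (g : M) : Prop :=
  ∃ h : M, h * h = 1 ∧ h * g * h⁻¹ = g⁻¹

lemma IsStronglyReversible.of_mul_self {M : Type*} [Group M] {g h : M} (hh : h * h = 1)
    (hg : h * g * h = g⁻¹) : IsStronglyReversible g :=
  ⟨h, hh, by rwa [inv_eq_of_mul_eq_one_right hh]⟩

lemma IsStronglyReversible.map {M N F : Type*} [Group M] [Group N] [FunLike F M N]
    [MonoidHomClass F M N] (f : F) {g : M} (hg : IsStronglyReversible g) :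
    IsStronglyReversible (f g) := by
  obtain ⟨h, hh, hgh⟩ := hg
  exact ⟨f h, by rw [← map_mul, hh, map_one],
    by rw [← map_mul, ← map_inv, ← map_mul, hgh, map_inv]⟩

section NormalForm

variable {R : Type*} [CommRing R]

lemma Matrix.det_sub_smul_one_fin_two (A : Matrix (Fin 2) (Fin 2) R) (s : R) :
    (A - s • 1).det = A.det - s * A.trace + s ^ 2 := by
  simp [det_fin_two, trace_fin_two]
  ring

lemma det_eq_one_of_sq_trace_eq {n : Type*} [Fintype n] [DecidableEq n] (A : (Matrix n n ℤ)ˣ)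
    (h : (A : Matrix n n ℤ).trace ^ 2 = 4 * (A : Matrix n n ℤ).det) :
    (A : Matrix n n ℤ).det = 1 := by
  rcases Int.isUnit_iff.mp (isUnits_det_units A) with h1 | h1
  · exact h1
  · rw [h1] at h
    nlinarith [sq_nonneg (A : Matrix n n ℤ).trace]

lemma exists_isCoprime_mulVec_eq_zero {D : Type*} [EuclideanDomain D] [GCDMonoid D]
    (N : Matrix (Fin 2) (Fin 2) D) (hN : N.det = 0) :
    ∃ v : Fin 2 → D, IsCoprime (v 0) (v 1) ∧ N *ᵥ v = 0 := by
  obtain ⟨w, hw0, hw⟩ := exists_mulVec_eq_zero_iff.mpr hN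
  set g := GCDMonoid.gcd (w 0) (w 1)
  have hg : g ≠ 0 := by
    intro h
    obtain ⟨h0, h1⟩ := (gcd_eq_zero_iff _ _).mp h
    exact hw0 (by ext i; fin_cases i <;> assumption)
  have hwg : w = g • fun i => w i / g := by
    ext i
    fin_cases i
    · exact (EuclideanDomain.mul_div_cancel' hg (gcd_dvd_left _ _)).symm
    · exact (EuclideanDomain.mul_div_cancel' hg (gcd_dvd_right _ _)).symm
  refine ⟨fun i => w i / g, isCoprime_div_gcd_div_gcd_of_gcd_ne_zero hg, ?_⟩
  rw [hwg, mulVec_smul] at hw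
  exact (smul_eq_zero.mp hw).resolve_left hg

lemma exists_mulVec_single_eq_of_isCoprime (v : Fin 2 → R) (hv : IsCoprime (v 0) (v 1)) :
    ∃ P : (Matrix (Fin 2) (Fin 2) R)ˣ, (P : Matrix (Fin 2) (Fin 2) R) *ᵥ Pi.single 0 1 = v := by
  obtain ⟨a, b, hab⟩ := hv
  refine ⟨⟨!![v 0, -b; v 1, a], !![a, b; -v 1, v 0], ?_, ?_⟩, ?_⟩
  · ext i j; fin_cases i <;> fin_cases j <;> simp [mul_comm] <;> linear_combination hab
  · ext i j; fin_cases i <;> fin_cases j <;> simp [mul_comm] <;> linear_combination hab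
  · ext i; fin_cases i <;> simp

lemma exists_conj_eq_upperTriangular (A P : (Matrix (Fin 2) (Fin 2) R)ˣ) (ε : R)
    (hε : ε * ε = 1) (hA : (A : Matrix (Fin 2) (Fin 2) R).det = 1)
    (hP : (A : Matrix (Fin 2) (Fin 2) R) *ᵥ ((P : Matrix (Fin 2) (Fin 2) R) *ᵥ Pi.single 0 1) =
      ε • ((P : Matrix (Fin 2) (Fin 2) R) *ᵥ Pi.single 0 1)) :
    ∃ x : R, ((P⁻¹ * A * P : (Matrix (Fin 2) (Fin 2) R)ˣ) : Matrix (Fin 2) (Fin 2) R) =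
      !![ε, x; 0, ε] := by
  set C := ((P⁻¹ * A * P : (Matrix (Fin 2) (Fin 2) R)ˣ) : Matrix (Fin 2) (Fin 2) R)
  have hC : C *ᵥ Pi.single 0 1 = ε • Pi.single 0 1 := by
    simp only [C, Units.val_mul, ← mulVec_mulVec, hP, mulVec_smul]
    rw [mulVec_mulVec, Units.inv_mul, one_mulVec]
  have hC0 : C 0 0 = ε := by simpa [mulVec_single_one] using congrFun hC 0
  have hC1 : C 1 0 = 0 := by simpa [mulVec_single_one] using congrFun hC 1
  have hdet : C 0 0 * C 1 1 - C 0 1 * C 1 0 = 1 := by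
    rw [← det_fin_two, ← hA]
    exact det_units_conj' P A
  refine ⟨C 0 1, ?_⟩
  rw [eta_fin_two C, hC0, hC1]
  congr
  rw [hC0, hC1] at hdet
  linear_combination ε * hdet - C 1 1 * hε

lemma val_inv_of_val_eq_upperTriangular {B : (Matrix (Fin 2) (Fin 2) R)ˣ} {ε x : R}
    (hε : ε * ε = 1) (hB : (B : Matrix (Fin 2) (Fin 2) R) = !![ε, x; 0, ε]) :
    ((B⁻¹ : (Matrix (Fin 2) (Fin 2) R)ˣ) : Matrix (Fin 2) (Fin 2) R) = !![ε, -x; 0, ε] := by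
  rw [Units.inv_eq_of_mul_eq_one_right (u := B) (a := !![ε, -x; 0, ε])]
  rw [hB, mul_fin_two]
  ext i j; fin_cases i <;> fin_cases j <;> simp [hε, mul_comm]

end NormalForm

lemma exists_conj_upperTriangular_of_parabolic (A : GL2)
    (hpar : (A : Matrix (Fin 2) (Fin 2) ℤ).trace ^ 2 = 4 * (A : Matrix (Fin 2) (Fin 2) ℤ).det) :
    ∃ (P B : GL2) (ε x : ℤ), (ε = 1 ∨ ε = -1) ∧
      (B : Matrix (Fin 2) (Fin 2) ℤ) = !![ε, x; 0, ε] ∧ A = P * B * P⁻¹ := by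
  have hdet := det_eq_one_of_sq_trace_eq A hpar
  obtain ⟨ε, hε, htr⟩ :
      ∃ ε : ℤ, (ε = 1 ∨ ε = -1) ∧ (A : Matrix (Fin 2) (Fin 2) ℤ).trace = 2 * ε := by
    rw [hdet, mul_one, show (4 : ℤ) = 2 ^ 2 by norm_num, sq_eq_sq_iff_eq_or_eq_neg] at hpar
    rcases hpar with h | h
    exacts [⟨1, .inl rfl, h⟩, ⟨-1, .inr rfl, by rw [h]; ring⟩]
  have hεε : ε * ε = 1 := by rcases hε with rfl | rfl <;> norm_num
  have hsing : ((A : Matrix (Fin 2) (Fin 2) ℤ) - ε • 1).det = 0 := by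
    rw [det_sub_smul_one_fin_two, hdet, htr]
    linear_combination -hεε
  obtain ⟨v, hv, hAv⟩ := exists_isCoprime_mulVec_eq_zero _ hsing
  obtain ⟨P, rfl⟩ := exists_mulVec_single_eq_of_isCoprime v hv
  rw [sub_mulVec, smul_mulVec, one_mulVec, sub_eq_zero] at hAv
  obtain ⟨x, hx⟩ := exists_conj_eq_upperTriangular A P ε hεε hdet hAv
  exact ⟨P, P⁻¹ * A * P, ε, x, hε, hx, by group⟩

lemma actV_mul (M N : Matrix (Fin 2) (Fin 2) ℤ) (x : V) :
    actV (M * N) x = actV M (actV N x) := by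
  simp only [actV, LinearMap.toAddMonoidHom_coe, mulVecLin_apply, mulVec_mulVec]
  exact congrArg (· *ᵥ x) (Matrix.map_mul (f := Int.castRingHom ℝ))

lemma actV_apply (M : Matrix (Fin 2) (Fin 2) ℤ) (x : V) (i : Fin 2) :
    actV M x i = M i 0 * x 0 + M i 1 * x 1 := by
  simp [actV, mulVec, dotProduct, Fin.sum_univ_two]

lemma act_mk (M : Matrix (Fin 2) (Fin 2) ℤ) (x : V) :
    act M (QuotientAddGroup.mk x) = QuotientAddGroup.mk (actV M x) := rfl

lemma act_one (x : T2) : act 1 x = x := by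
  induction x using QuotientAddGroup.induction_on with
  | H x => simp [act_mk, actV]

lemma act_mul (M N : Matrix (Fin 2) (Fin 2) ℤ) (x : T2) :
    act (M * N) x = act M (act N x) := by
  induction x using QuotientAddGroup.induction_on with
  | H x => simp only [act_mk, actV_mul]

/-- `GL2 × T2` with the semidirect product law `Gmul`, as a type carrying a `Group` instance. -/
def G : Type := GL2 × T2

instance : Mul G := ⟨Gmul⟩
instance : One G := ⟨((1 : GL2), (0 : T2))⟩
instance : Inv G := ⟨Ginv⟩

instance : Group G := Group.ofLeftAxioms
  (fun p q r => by
    change Gmul (Gmul p q) r = Gmul p (Gmul q r)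
    simp only [Gmul, mul_assoc, Units.val_mul, act_mul, map_add, add_assoc])
  (fun p => by
    change Gmul (1, 0) p = p
    simp only [Gmul, one_mul, Units.val_one, act_one, add_zero]
    rfl)
  (fun p => by
    change Gmul (Ginv p) p = (1, 0)
    simp [Gmul, Ginv])

def G.mk (A : GL2) (a : T2) : G := (A, a)

lemma G.mk_mul_mk (A B : GL2) (a b : T2) :
    G.mk A a * G.mk B b = G.mk (A * B) (act A b + a) := rfl

lemma G.mk_inv (A : GL2) (a : T2) : (G.mk A a)⁻¹ = G.mk A⁻¹ (-act (A⁻¹ : GL2) a) := rfl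

lemma G.conj_mk (P B : GL2) (b : T2) :
    G.mk P 0 * G.mk B b * (G.mk P 0)⁻¹ = G.mk (P * B * P⁻¹) (act P b) := by
  simp only [G.mk_inv, G.mk_mul_mk, map_zero, neg_zero, add_zero, zero_add]

lemma isStronglyReversible_mk_of_actV (B H : GL2) (w t : V) (hH : H * H = 1)
    (hHB : H * B * H = B⁻¹) (ht : actV H t + t = 0)
    (hw : actV (H * B : GL2) t + (actV H w + t) = -actV (B⁻¹ : GL2) w) :
    IsStronglyReversible (G.mk B (QuotientAddGroup.mk w)) := by
  refine .of_mul_self (h := G.mk H (QuotientAddGroup.mk t)) ?_ ?_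
  · rw [G.mk_mul_mk, hH, act_mk, ← QuotientAddGroup.mk_add, ht]
    rfl
  · rw [G.mk_mul_mk, G.mk_mul_mk, G.mk_inv, hHB]
    simp only [act_mk, ← QuotientAddGroup.mk_add, ← QuotientAddGroup.mk_neg, hw]

def diagOneNegOne : GL2 :=
  ⟨!![1, 0; 0, -1], !![1, 0; 0, -1], by simp [one_fin_two], by simp [one_fin_two]⟩

lemma isStronglyReversible_mk_one (b : T2) : IsStronglyReversible (G.mk 1 b) := by
  obtain ⟨w, rfl⟩ := QuotientAddGroup.mk_surjective b
  refine isStronglyReversible_mk_of_actV 1 (-1) w 0 (by simp) (by simp) (by simp) ?_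
  ext i; fin_cases i <;> simp [actV]

lemma isStronglyReversible_mk_of_val_eq_unipotent (B : GL2) (x : ℤ) (hx : x ≠ 0)
    (hB : (B : Matrix (Fin 2) (Fin 2) ℤ) = !![1, x; 0, 1]) (b : T2) :
    IsStronglyReversible (G.mk B b) := by
  obtain ⟨w, rfl⟩ := QuotientAddGroup.mk_surjective b
  have hBinv := val_inv_of_val_eq_upperTriangular (by norm_num) hB
  -- the reversing equation reduces to `x * t 1 = x * w 1 - 2 * w 0`, solvable as `x ≠ 0`
  refine isStronglyReversible_mk_of_actV B diagOneNegOne w ![0, w 1 - 2 * w 0 / x] ?_ ?_ ?_ ?_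
  · ext i j; fin_cases i <;> fin_cases j <;> simp [diagOneNegOne]
  · ext i j; fin_cases i <;> fin_cases j <;> simp [diagOneNegOne, hB, hBinv]
  · ext i; fin_cases i <;> simp [diagOneNegOne, actV_apply]
  · ext i; fin_cases i <;> simp only [Pi.add_apply, Pi.neg_apply, actV_apply] <;>
      simp [diagOneNegOne, hB, hBinv] <;> field_simp <;> ring

lemma isStronglyReversible_mk_of_val_eq_neg_unipotent (B : GL2) (x : ℤ)
    (hB : (B : Matrix (Fin 2) (Fin 2) ℤ) = !![-1, x; 0, -1]) (b : T2) :
    IsStronglyReversible (G.mk B b) := by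
  obtain ⟨w, rfl⟩ := QuotientAddGroup.mk_surjective b
  have hBinv := val_inv_of_val_eq_upperTriangular (by norm_num) hB
  refine isStronglyReversible_mk_of_actV B diagOneNegOne w ![0, w 1] ?_ ?_ ?_ ?_
  · ext i j; fin_cases i <;> fin_cases j <;> simp [diagOneNegOne]
  · ext i j; fin_cases i <;> fin_cases j <;> simp [diagOneNegOne, hB, hBinv]
  · ext i; fin_cases i <;> simp [diagOneNegOne, actV_apply]
  · ext i; fin_cases i <;> simp only [Pi.add_apply, Pi.neg_apply, actV_apply] <;>
      simp [diagOneNegOne, hB, hBinv]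

lemma isStronglyReversible_mk_of_val_eq_upperTriangular (B : GL2) (ε x : ℤ)
    (hε : ε = 1 ∨ ε = -1) (hB : (B : Matrix (Fin 2) (Fin 2) ℤ) = !![ε, x; 0, ε]) (b : T2) :
    IsStronglyReversible (G.mk B b) := by
  rcases hε with rfl | rfl
  · by_cases hx : x = 0
    · obtain rfl : B = 1 := Units.ext (by rw [hB, hx, Units.val_one, one_fin_two])
      exact isStronglyReversible_mk_one b
    · exact isStronglyReversible_mk_of_val_eq_unipotent B x hx hB b
  · exact isStronglyReversible_mk_of_val_eq_neg_unipotent B x hB b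

/-- If `A ∈ GL(2,ℤ)` is parabolic (`tr(A)² = 4 det A`), then every `(A,ā)` is strongly
reversible in `G = GL(2,ℤ) ⋉ 𝕋²`. -/
theorem parabolic_strongly_reversible (A : GL2)
    (hpar : (Matrix.trace (A : Matrix (Fin 2) (Fin 2) ℤ)) ^ 2 =
      4 * (A : Matrix (Fin 2) (Fin 2) ℤ).det) :
    ∀ a : T2, (∃ h : GL2 × T2, Gmul h h = (1, 0) ∧
      Gmul (Gmul h (A, a)) (Ginv h) = Ginv (A, a)) := by
  intro a
  obtain ⟨P, B, ε, x, hε, hB, rfl⟩ := exists_conj_upperTriangular_of_parabolic A hpar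
  have hrev := (isStronglyReversible_mk_of_val_eq_upperTriangular B ε x hε hB
    (act (P⁻¹ : GL2) a)).map (MulAut.conj (G.mk P 0))
  rwa [MulAut.conj_apply, G.conj_mk, ← act_mul, ← Units.val_mul, mul_inv_cancel, Units.val_one,
    act_one] at hrev
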